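/- For every n, the map φ'_n : Ω'_{n+1} → Ω'_n given by φ'_n(ω) = φ_n(ω)' is a group homomorphism with respect to the operation ∗: φ'_n(ω ∗ ξ) = φ'_n(ω) ∗ φ'_n(ξ) for all ω, ξ ∈ Ω'_{n+1}. -/

import Mathlib

open Classical
noncomputable section

namespace GCG

/-- One-step backtrack reduction of a word: replace some substring `u v u` by `u`. -/
def ReduceStep {V : Type*} (l r : List V) : Prop :=
  ∃ (p s : List V) (u v : V), l = p ++ [u, v, u] ++ s ∧ r = p ++ [u] ++ s

/-- A word is reduced if it admits no one-step reduction. -/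
def IsReduced {V : Type*} (l : List V) : Prop := ∀ r, ¬ ReduceStep l r

/-- The reduction `ω'` of a word: the (for words in a simple graph, unique) reduced
word obtained from it by repeatedly replacing substrings `u v u` by `u`. -/
def reduce {V : Type*} (l : List V) : List V :=
  if h : ∃ r, Relation.ReflTransGen ReduceStep l r ∧ IsReduced r then h.choose else l

/-- Compress every maximal constant substring `u u ⋯ u` to the single letter `u`. -/
def compress {V : Type*} : List V → List V
  | [] => []
  | [a] => [a]
  | a :: b :: t => if a = b then compress (b :: t) else a :: compress (b :: t)

/-- Delete–Replace–Compress along `f`: delete the letters sent into `S`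
(the subdivision points), replace the remaining letters by their images,
and compress maximal constant substrings. -/
def DRC {V' V S : Type*} (f : V' → V ⊕ S) (w : List V') : List V :=
  compress (w.filterMap fun v => (f v).getLeft?)

/-- A word in a simple graph: a finite list of vertices in which consecutive
letters are distinct and joined by an edge. -/
def IsWord {V : Type*} (G : SimpleGraph V) (l : List V) : Prop := l.Chain' G.Adj

/-- A loop word at `x`: a word that starts and ends with `x`. -/
def IsLoopWord {V : Type*} (G : SimpleGraph V) (x : V) (l : List V) : Prop :=
  l.Chain' G.Adj ∧ l.head? = some x ∧ l.getLast? = some x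

/-- Concatenation of loop words: the duplicated base letter is dropped. -/
def lconcat {V : Type*} (ω ξ : List V) : List V := ω.dropLast ++ ξ

/-- `Gs` (on vertex set `V ⊕ S`) is the subdivision of `G` in which every edge is
evenly subdivided into `d` edges: every edge of `G` is replaced by a path of
length `d` through fresh interior vertices from `S`, these paths are compatible
with edge reversal, their interiors are pairwise disjoint, they exhaust `S`, and
their steps are exactly the edges of `Gs`. -/
def IsEvenSubdivision {V S : Type*} (G : SimpleGraph V) (d : ℕ)
    (Gs : SimpleGraph (V ⊕ S)) : Prop :=
  ∃ P : G.Dart → Fin (d + 1) → V ⊕ S,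
    (∀ e, P e 0 = Sum.inl e.toProd.1) ∧
    (∀ e, P e (Fin.last d) = Sum.inl e.toProd.2) ∧
    (∀ e (i : Fin (d + 1)), 0 < i.val → i.val < d → ∃ s : S, P e i = Sum.inr s) ∧
    (∀ e, Function.Injective (P e)) ∧
    (∀ e (i : Fin (d + 1)), P e.symm i = P e i.rev) ∧
    (∀ s : S, ∃ e i, P e i = Sum.inr s) ∧
    (∀ e e' (i i' : Fin (d + 1)), 0 < i.val → i.val < d → P e i = P e' i' →
      (e' = e ∧ i' = i) ∨ (e' = e.symm ∧ i' = i.rev)) ∧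
    (∀ a b, Gs.Adj a b ↔ ∃ e, ∃ i : Fin d, P e i.castSucc = a ∧ P e i.succ = b)

/-- The inverse sequence of finite connected simple graphs `X_n` with even
subdivisions `X*_n` and simplicial bonding surjections `f_n : X_{n+1} → X*_n`
mapping every edge onto an edge, together with coherent base vertices `x_n`. -/
structure GraphTower where
  V : ℕ → Type
  S : ℕ → Type
  finV : ∀ n, Finite (V n)
  G : ∀ n, SimpleGraph (V n)
  conn : ∀ n, (G n).Connected
  d : ℕ → ℕ
  two_le_d : ∀ n, 2 ≤ d n
  Gs : ∀ n, SimpleGraph (V n ⊕ S n)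
  subdiv : ∀ n, IsEvenSubdivision (G n) (d n) (Gs n)
  f : ∀ n, V (n + 1) → V n ⊕ S n
  f_surj : ∀ n, Function.Surjective (f n)
  f_simplicial : ∀ n ⦃u v⦄, (G (n + 1)).Adj u v → (Gs n).Adj (f n u) (f n v)
  f_edge_surj : ∀ n ⦃a b⦄, (Gs n).Adj a b →
    ∃ u v, (G (n + 1)).Adj u v ∧ f n u = a ∧ f n v = b
  x : ∀ n, V n
  f_base : ∀ n, f n (x (n + 1)) = Sum.inl (x n)

namespace GraphTower

/-- The projection `φ_n = DRC_n`. -/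
def phi (T : GraphTower) (n : ℕ) : List (T.V (n + 1)) → List (T.V n) := DRC (T.f n)

/-- The composite projection `φ_n ∘ φ_{n+1} ∘ ⋯ ∘ φ_{n+m-1}` (the identity for `m = 0`). -/
def proj (T : GraphTower) (n : ℕ) : (m : ℕ) → List (T.V (n + m)) → List (T.V n)
  | 0, w => w
  | m + 1, w => T.proj n m (T.phi (n + m) w)

/-- Membership in `Ω = lim←(Ω_n, φ_n)`: a coherent sequence of loop words. -/
def MemOmega (T : GraphTower) (ω : ∀ n, List (T.V n)) : Prop :=
  (∀ n, IsLoopWord (T.G n) (T.x n) (ω n)) ∧ ∀ n, T.phi n (ω (n + 1)) = ω n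

/-- Membership in `G = lim←(Ω'_n, φ'_n)`: a `φ'`-coherent sequence of reduced loop words. -/
def MemG (T : GraphTower) (g : ∀ n, List (T.V n)) : Prop :=
  (∀ n, IsLoopWord (T.G n) (T.x n) (g n) ∧ IsReduced (g n)) ∧
    ∀ n, reduce (T.phi n (g (n + 1))) = g n

/-- A sequence is locally eventually constant if for every fixed level `n` the
unreduced projections of its later terms to level `n` are eventually constant. -/
def LEC (T : GraphTower) (g : ∀ n, List (T.V n)) : Prop :=
  ∀ n, ∃ M, ∀ m, M ≤ m → T.proj n m (g (n + m)) = T.proj n M (g (n + M))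

/-- `ω` is the stabilization `←g` of `g`: for every level `n`, the projections of
the later terms of `g` to level `n` eventually equal `ω n`. -/
def IsStabilization (T : GraphTower) (g ω : ∀ n, List (T.V n)) : Prop :=
  ∀ n, ∃ M, ∀ m, M ≤ m → T.proj n m (g (n + m)) = ω n

/-- The identity word sequence `(x_n)_n`. -/
def seqOne (T : GraphTower) : ∀ n, List (T.V n) := fun n => [T.x n]

/-- Termwise concatenation followed by termwise reduction. -/
def seqMul (T : GraphTower) (g h : ∀ n, List (T.V n)) : ∀ n, List (T.V n) :=
  fun n => reduce (lconcat (g n) (h n))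

/-- Termwise reversal. -/
def seqInv (T : GraphTower) (g : ∀ n, List (T.V n)) : ∀ n, List (T.V n) :=
  fun n => (g n).reverse

/-- Membership in `←𝒢`: the stabilization of some locally eventually constant
element of `G`. -/
def MemSG (T : GraphTower) (ω : ∀ n, List (T.V n)) : Prop :=
  ∃ g, T.MemG g ∧ T.LEC g ∧ T.IsStabilization g ω

/-- `τ = ω ∗ ξ`: termwise concatenation, followed by termwise reduction,
followed by stabilization. -/
def star (T : GraphTower) (ω ξ τ : ∀ n, List (T.V n)) : Prop :=
  T.IsStabilization (fun n => reduce (lconcat (ω n) (ξ n))) τ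

end GraphTower

end GCG

/-!
Backtrack reduction `u v u ↦ u` is confluent, so `reduce` is constant along reduction sequences
and is compatible with concatenation of loop words. The projection `DRC` commutes with
concatenation, and it sends a reduction step `u v u ↦ u` of a loop word either to an equality or
to a single reduction step. The only nontrivial case is `f u` inside a subdivided edge `e` and
`f v` a vertex: a walk in the subdivision can only enter or leave the inside of `e` through its
ends, so the last vertex before `f u`, the vertex `f v` and the first vertex after it are all ends
of `e`. Deleting `f v` then either merges two equal neighbouring letters or removes a backtrack
`c (f v) c`.
-/

namespace GCG

open Relation

section Reduction

variable {V : Type*}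

lemma ReduceStep.append_left {l r : List V} (t : List V) (h : ReduceStep l r) :
    ReduceStep (t ++ l) (t ++ r) := by
  obtain ⟨p, s, u, v, rfl, rfl⟩ := h
  exact ⟨t ++ p, s, u, v, by simp, by simp⟩

lemma ReduceStep.append_right {l r : List V} (t : List V) (h : ReduceStep l r) :
    ReduceStep (l ++ t) (r ++ t) := by
  obtain ⟨p, s, u, v, rfl, rfl⟩ := h
  exact ⟨p, s ++ t, u, v, by simp, by simp⟩

lemma isReduced_of_length_lt {l : List V} (h : l.length < 3) : IsReduced l := by
  rintro r ⟨p, s, u, v, rfl, -⟩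
  simp at h
  omega

lemma isReduced_cons_cons_cons {a b c : V} {t : List V} :
    IsReduced (a :: b :: c :: t) ↔ a ≠ c ∧ IsReduced (b :: c :: t) := by
  constructor
  · intro h
    refine ⟨fun hac => h (a :: t) ⟨[], t, a, b, by simp [hac], rfl⟩, fun r hr => ?_⟩
    exact h (a :: r) (by simpa using hr.append_left [a])
  · rintro ⟨hac, h⟩ r ⟨p, s, u, v, hl, -⟩
    rcases p with _ | ⟨a', p⟩
    · simp only [List.nil_append, List.cons_append, List.cons.injEq] at hl
      exact hac (hl.1.trans hl.2.2.1.symm)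
    · exact h _ ⟨p, s, u, v, (List.cons.inj hl).2, rfl⟩

lemma IsReduced.of_cons {a : V} {l : List V} (h : IsReduced (a :: l)) : IsReduced l :=
  fun r hr => h (a :: r) (by simpa using hr.append_left [a])

def consReduce (a : V) : List V → List V
  | b :: c :: t => if c = a then c :: t else a :: b :: c :: t
  | l => a :: l

def normalForm : List V → List V
  | [] => []
  | a :: t => consReduce a (normalForm t)

lemma reflTransGen_consReduce (a : V) (l : List V) :
    ReflTransGen ReduceStep (a :: l) (consReduce a l) := by
  match l with
  | [] | [_] => exact .refl
  | b :: c :: t =>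
    by_cases hca : c = a
    · simpa [consReduce, hca] using ReflTransGen.single ⟨[], t, a, b, by subst hca; rfl, rfl⟩
    · simpa [consReduce, hca] using ReflTransGen.refl

lemma isReduced_consReduce (a : V) {l : List V} (hl : IsReduced l) :
    IsReduced (consReduce a l) := by
  match l with
  | [] | [_] => exact isReduced_of_length_lt (by simp [consReduce])
  | b :: c :: t =>
    by_cases hca : c = a
    · simpa [consReduce, hca] using hl.of_cons
    · simpa [consReduce, hca, isReduced_cons_cons_cons, Ne.symm hca] using hl

lemma consReduce_of_isReduced {a : V} {l : List V} (h : IsReduced (a :: l)) :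
    consReduce a l = a :: l := by
  match l with
  | [] | [_] => rfl
  | b :: c :: t => simp [consReduce, Ne.symm (isReduced_cons_cons_cons.mp h).1]

lemma isReduced_normalForm (l : List V) : IsReduced (normalForm l) := by
  induction l with
  | nil => exact isReduced_of_length_lt (by simp [normalForm])
  | cons a t ih => exact isReduced_consReduce a ih

lemma reflTransGen_normalForm (l : List V) : ReflTransGen ReduceStep l (normalForm l) := by
  induction l with
  | nil => exact .refl
  | cons a t ih =>
    exact (ih.lift (a :: ·) fun _ _ h => by simpa using h.append_left [a]).trans
      (reflTransGen_consReduce a _)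

lemma normalForm_of_isReduced {l : List V} (h : IsReduced l) : normalForm l = l := by
  induction l with
  | nil => rfl
  | cons a t ih => rw [normalForm, ih h.of_cons, consReduce_of_isReduced h]

/-- The local confluence that makes `normalForm` invariant under reduction steps. -/
lemma consReduce_consReduce_consReduce (u v : V) {l : List V} (hl : IsReduced l) :
    consReduce u (consReduce v (consReduce u l)) = consReduce u l := by
  match l with
  | [] => simp [consReduce]
  | [b] => by_cases hbv : b = v <;> simp [consReduce, hbv]
  | [b, c] => by_cases hcu : c = u <;> by_cases hbv : b = v <;> simp [consReduce, hcu, hbv]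
  | [b, c, d] =>
    have hbd := (isReduced_cons_cons_cons.mp hl).1
    by_cases hcu : c = u <;> by_cases hbv : b = v <;> by_cases hdv : d = v <;>
      simp_all [consReduce]
  | b :: c :: d :: e :: t =>
    have hbd := (isReduced_cons_cons_cons.mp hl).1
    have hec := Ne.symm (isReduced_cons_cons_cons.mp hl.of_cons).1
    by_cases hcu : c = u <;> by_cases hbv : b = v <;> by_cases hdv : d = v <;>
      simp_all [consReduce]

lemma normalForm_eq_of_reduceStep {l r : List V} (h : ReduceStep l r) :
    normalForm l = normalForm r := by
  obtain ⟨p, s, u, v, rfl, rfl⟩ := h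
  induction p with
  | nil => exact consReduce_consReduce_consReduce u v (isReduced_normalForm s)
  | cons a p ih => exact congrArg (consReduce a) ih

lemma normalForm_eq_of_reflTransGen {l r : List V} (h : ReflTransGen ReduceStep l r) :
    normalForm l = normalForm r := by
  induction h with
  | refl => rfl
  | tail _ h ih => rw [ih, normalForm_eq_of_reduceStep h]

lemma reduce_eq_normalForm (l : List V) : reduce l = normalForm l := by
  have hex : ∃ r, ReflTransGen ReduceStep l r ∧ IsReduced r :=
    ⟨normalForm l, reflTransGen_normalForm l, isReduced_normalForm l⟩
  rw [reduce, dif_pos hex, normalForm_eq_of_reflTransGen hex.choose_spec.1,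
    normalForm_of_isReduced hex.choose_spec.2]

lemma reflTransGen_reduce (l : List V) : ReflTransGen ReduceStep l (reduce l) :=
  reduce_eq_normalForm l ▸ reflTransGen_normalForm l

lemma reduce_eq_of_reflTransGen {l r : List V} (h : ReflTransGen ReduceStep l r) :
    reduce l = reduce r := by
  rw [reduce_eq_normalForm, reduce_eq_normalForm, normalForm_eq_of_reflTransGen h]

lemma ReduceStep.head?_eq {l r : List V} (h : ReduceStep l r) : r.head? = l.head? := by
  obtain ⟨p, s, u, v, rfl, rfl⟩ := h
  cases p <;> simp

lemma ReduceStep.getLast?_eq {l r : List V} (h : ReduceStep l r) :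
    r.getLast? = l.getLast? := by
  obtain ⟨p, s, u, v, rfl, rfl⟩ := h
  rcases s.eq_nil_or_concat with rfl | ⟨s, a, rfl⟩ <;> simp [← List.append_assoc]

lemma ReduceStep.isChain {R : V → V → Prop} {l r : List V} (h : ReduceStep l r)
    (hl : l.IsChain R) : r.IsChain R := by
  obtain ⟨p, s, u, v, rfl, rfl⟩ := h
  exact (hl.infix ⟨[], [v, u] ++ s, by simp⟩).append_overlap
    (hl.infix ⟨p ++ [u, v], [], by simp⟩) (List.cons_ne_nil u [])

lemma ReduceStep.map {W : Type*} (f : V → W) {l r : List V} (h : ReduceStep l r) :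
    ReduceStep (l.map f) (r.map f) := by
  obtain ⟨p, s, u, v, rfl, rfl⟩ := h
  exact ⟨p.map f, s.map f, f u, f v, by simp, by simp⟩

lemma head?_eq_of_reflTransGen {l r : List V} (h : ReflTransGen ReduceStep l r) :
    r.head? = l.head? := by
  induction h with
  | refl => rfl
  | tail _ h ih => rw [h.head?_eq, ih]

lemma getLast?_eq_of_reflTransGen {l r : List V} (h : ReflTransGen ReduceStep l r) :
    r.getLast? = l.getLast? := by
  induction h with
  | refl => rfl
  | tail _ h ih => rw [h.getLast?_eq, ih]

lemma IsLoopWord.of_reflTransGen {G : SimpleGraph V} {x : V} {l r : List V}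
    (hl : IsLoopWord G x l) (h : ReflTransGen ReduceStep l r) : IsLoopWord G x r := by
  refine ⟨?_, head?_eq_of_reflTransGen h ▸ hl.2.1, getLast?_eq_of_reflTransGen h ▸ hl.2.2⟩
  induction h with
  | refl => exact hl.1
  | tail _ h ih => exact h.isChain ih

end Reduction

section Concatenation

variable {V : Type*}

lemma head?_reduce (l : List V) : (reduce l).head? = l.head? :=
  head?_eq_of_reflTransGen (reflTransGen_reduce l)

lemma getLast?_reduce (l : List V) : (reduce l).getLast? = l.getLast? :=
  getLast?_eq_of_reflTransGen (reflTransGen_reduce l)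

lemma lconcat_eq_append_tail {a b : List V} {x : V} (ha : a.getLast? = some x)
    (hb : b.head? = some x) : lconcat a b = a ++ b.tail := by
  rw [lconcat, List.eq_cons_of_mem_head? hb, ← List.dropLast_append_getLast? x ha]
  simp

lemma IsLoopWord.lconcat {G : SimpleGraph V} {x : V} {a b : List V} (ha : IsLoopWord G x a)
    (hb : IsLoopWord G x b) : IsLoopWord G x (lconcat a b) := by
  have ha' : a.dropLast ++ [x] = a := List.dropLast_append_getLast? x ha.2.2
  have hb' : [x] ++ b.tail = b := (List.eq_cons_of_mem_head? hb.2.1).symm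
  have hne : b ≠ [] := by rintro rfl; simp at hb'
  refine ⟨?_, ?_, ?_⟩
  · rw [GCG.lconcat, ← hb', ← List.append_assoc]
    exact (ha' ▸ ha.1).append_overlap (hb' ▸ hb.1) (List.cons_ne_nil x [])
  · rw [lconcat_eq_append_tail ha.2.2 hb.2.1, List.head?_append, ha.2.1]
    rfl
  · rw [GCG.lconcat, List.getLast?_append_of_ne_nil _ hne, hb.2.2]

lemma reduce_lconcat_reduce_reduce {a b : List V} {x : V} (ha : a.getLast? = some x)
    (hb : b.head? = some x) : reduce (lconcat (reduce a) (reduce b)) = reduce (lconcat a b) := by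
  have hra : (reduce a).getLast? = some x := (getLast?_reduce a).trans ha
  have hrb : (reduce b).head? = some x := (head?_reduce b).trans hb
  calc reduce (lconcat (reduce a) (reduce b))
      _ = reduce (reduce a ++ (reduce b).tail) := by
        rw [lconcat_eq_append_tail hra hrb]
      _ = reduce (a ++ (reduce b).tail) := (reduce_eq_of_reflTransGen <|
        (reflTransGen_reduce a).lift (· ++ _) fun _ _ h => h.append_right _).symm
      _ = reduce (a.dropLast ++ reduce b) := by
        rw [← lconcat_eq_append_tail ha hrb, GCG.lconcat]
      _ = reduce (lconcat a b) := (reduce_eq_of_reflTransGen <|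
        (reflTransGen_reduce b).lift (_ ++ ·) fun _ _ h => h.append_left _).symm

end Concatenation

section Compress

variable {V : Type*}

lemma compress_cons (a : V) (l : List V) :
    compress (a :: l) = if l.head? = some a then compress l else a :: compress l := by
  cases l with
  | nil => simp [compress]
  | cons b t => by_cases h : a = b <;> simp [compress, h, eq_comm]

lemma compress_cons_cons_self (a : V) (l : List V) :
    compress (a :: a :: l) = compress (a :: l) := by
  simp [compress]

lemma head?_compress (l : List V) : (compress l).head? = l.head? := by
  induction l with
  | nil => rfl
  | cons a t ih =>
    rw [compress_cons]
    split_ifs with h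
    · rw [ih, h]; rfl
    · rfl

lemma compress_eq_nil_iff {l : List V} : compress l = [] ↔ l = [] := by
  rw [← List.head?_eq_none_iff, ← List.head?_eq_none_iff, head?_compress]

lemma getLast?_compress (l : List V) : (compress l).getLast? = l.getLast? := by
  induction l with
  | nil => rfl
  | cons a t ih =>
    rcases t with _ | ⟨b, t⟩
    · rfl
    rw [compress_cons]
    split_ifs
    · rw [ih, List.getLast?_cons_cons]
    · rw [List.getLast?_cons_of_ne_nil (compress_eq_nil_iff.not.mpr (List.cons_ne_nil b t)), ih,
        List.getLast?_cons_cons]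

lemma compress_append_cons (L : List V) (a : V) (M : List V) :
    compress (L ++ a :: M) = (compress (L ++ [a])).dropLast ++ compress (a :: M) := by
  induction L with
  | nil => simp [compress]
  | cons b L ih =>
    rw [List.cons_append, List.cons_append, compress_cons, compress_cons]
    have hhead : (L ++ a :: M).head? = (L ++ [a]).head? := by cases L <;> simp
    rw [hhead]
    split_ifs
    · exact ih
    · have hne : compress (L ++ [a]) ≠ [] := compress_eq_nil_iff.not.mpr (by simp)
      rw [List.dropLast_cons_of_ne_nil hne, List.cons_append, ih]

lemma compress_append_cons_cons_self (L : List V) (a : V) (M : List V) :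
    compress (L ++ a :: a :: M) = compress (L ++ a :: M) := by
  rw [compress_append_cons L a (a :: M), compress_append_cons L a M, compress_cons_cons_self]

lemma compress_append_of_getLast?_ne_head? {A B : List V} {c c' : V} (hA : A.getLast? = some c)
    (hB : B.head? = some c') (hcc' : c ≠ c') : compress (A ++ B) = compress A ++ compress B := by
  obtain ⟨X, rfl⟩ : ∃ X, A = X ++ [c] := ⟨_, (List.dropLast_append_getLast? c hA).symm⟩
  obtain ⟨Y, rfl⟩ : ∃ Y, B = c' :: Y := ⟨_, List.eq_cons_of_mem_head? hB⟩
  obtain ⟨Z, hZ⟩ : ∃ Z, compress (X ++ [c]) = Z ++ [c] :=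
    ⟨_, (List.dropLast_append_getLast? c ((getLast?_compress _).trans hA)).symm⟩
  rw [List.append_assoc, List.singleton_append, compress_append_cons, hZ, compress_cons,
    if_neg (by simpa using hcc'.symm)]
  simp

lemma compress_append_of_getLast?_eq_head? {A B : List V} {c : V} (hA : A.getLast? = some c)
    (hB : B.head? = some c) : compress (A ++ B) = compress A ++ (compress B).tail := by
  obtain ⟨X, rfl⟩ : ∃ X, A = X ++ [c] := ⟨_, (List.dropLast_append_getLast? c hA).symm⟩
  obtain ⟨Y, rfl⟩ : ∃ Y, B = c :: Y := ⟨_, List.eq_cons_of_mem_head? hB⟩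
  obtain ⟨Z, hZ⟩ : ∃ Z, compress (X ++ [c]) = Z ++ [c] :=
    ⟨_, (List.dropLast_append_getLast? c ((getLast?_compress _).trans hA)).symm⟩
  obtain ⟨W, hW⟩ : ∃ W, compress (c :: Y) = c :: W :=
    ⟨_, List.eq_cons_of_mem_head? ((head?_compress _).trans hB)⟩
  rw [List.append_assoc, List.singleton_append, compress_append_cons, hZ,
    compress_cons_cons_self, hW]
  simp

lemma compress_append_cons_eq_or_reduceStep {A B : List V} {b c c' : V}
    (hA : A.getLast? = some c) (hB : B.head? = some c') (h : c = b ∨ c' = b ∨ c = c') :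
    compress (A ++ b :: B) = compress (A ++ B) ∨
      ReduceStep (compress (A ++ b :: B)) (compress (A ++ B)) := by
  obtain ⟨X, rfl⟩ : ∃ X, A = X ++ [c] := ⟨_, (List.dropLast_append_getLast? c hA).symm⟩
  obtain ⟨Y, rfl⟩ : ∃ Y, B = c' :: Y := ⟨_, List.eq_cons_of_mem_head? hB⟩
  by_cases hc'b : c' = b
  · left
    rw [hc'b, compress_append_cons_cons_self]
  by_cases hcb : c = b
  · left
    simp only [hcb, List.append_assoc, List.cons_append, List.nil_append]
    exact compress_append_cons_cons_self X b _
  right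
  obtain rfl : c = c' := by tauto
  obtain ⟨Z, hZ⟩ : ∃ Z, compress (X ++ [c]) = Z ++ [c] :=
    ⟨_, (List.dropLast_append_getLast? c ((getLast?_compress _).trans hA)).symm⟩
  obtain ⟨W, hW⟩ : ∃ W, compress (c :: Y) = c :: W :=
    ⟨_, List.eq_cons_of_mem_head? ((head?_compress _).trans hB)⟩
  rw [compress_append_of_getLast?_ne_head? hA rfl hcb, compress_cons,
    if_neg (by simpa using hc'b), compress_append_of_getLast?_eq_head? hA hB, hZ, hW]
  exact ⟨Z, W, c, b, by simp, by simp⟩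

end Compress

section Subdivision

/-- The paths `P e` replacing the darts `e` of `G` in an even subdivision `Gs`, with those
properties of `IsEvenSubdivision` that the projection argument needs. -/
structure SubdivisionPaths {V S : Type*} (G : SimpleGraph V) (d : ℕ) (Gs : SimpleGraph (V ⊕ S))
    (P : G.Dart → Fin (d + 1) → V ⊕ S) : Prop where
  zero : ∀ e, P e 0 = Sum.inl e.fst
  last : ∀ e, P e (Fin.last d) = Sum.inl e.snd
  interior : ∀ e (i : Fin (d + 1)), 0 < i.val → i.val < d → ∃ s, P e i = Sum.inr s
  symm : ∀ e i, P e.symm i = P e i.rev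
  exists_eq_inr : ∀ s : S, ∃ e i, P e i = Sum.inr s
  eq_of_interior : ∀ e e' (i i' : Fin (d + 1)), 0 < i.val → i.val < d → P e i = P e' i' →
    (e' = e ∧ i' = i) ∨ (e' = e.symm ∧ i' = i.rev)
  exists_of_adj : ∀ a b, Gs.Adj a b → ∃ e, ∃ i : Fin d, P e i.castSucc = a ∧ P e i.succ = b

variable {V S : Type*} {G : SimpleGraph V} {d : ℕ} {Gs : SimpleGraph (V ⊕ S)}

lemma IsEvenSubdivision.exists_subdivisionPaths (h : IsEvenSubdivision G d Gs) :
    ∃ P, SubdivisionPaths G d Gs P := by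
  obtain ⟨P, h0, h1, h2, -, h4, h5, h6, h7⟩ := h
  exact ⟨P, h0, h1, h2, h4, h5, h6, fun a b => (h7 a b).mp⟩

namespace SubdivisionPaths

variable {P : G.Dart → Fin (d + 1) → V ⊕ S}

lemma pos_and_lt_of_eq_inr (hP : SubdivisionPaths G d Gs P) {e : G.Dart} {i : Fin (d + 1)} {s : S}
    (h : P e i = Sum.inr s) : 0 < i.val ∧ i.val < d := by
  refine ⟨Nat.pos_of_ne_zero fun hi => ?_, lt_of_le_of_ne (Nat.lt_succ_iff.mp i.isLt) fun hi => ?_⟩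
  · rw [show i = 0 from Fin.ext hi, hP.zero] at h
    cases h
  · rw [show i = Fin.last d from Fin.ext hi, hP.last] at h
    cases h

lemma eq_zero_or_eq_last_of_eq_inl (hP : SubdivisionPaths G d Gs P) {e : G.Dart}
    {i : Fin (d + 1)} {y : V} (h : P e i = Sum.inl y) : i = 0 ∨ i = Fin.last d := by
  by_contra! hi
  obtain ⟨s, hs⟩ := hP.interior e i (Nat.pos_of_ne_zero (Fin.val_ne_iff.mpr hi.1))
    (lt_of_le_of_ne (Nat.lt_succ_iff.mp i.isLt) (Fin.val_ne_iff.mpr hi.2))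
  rw [h] at hs
  cases hs

lemma eq_fst_or_eq_snd_of_eq_inl (hP : SubdivisionPaths G d Gs P) {e : G.Dart}
    {i : Fin (d + 1)} {y : V} (h : P e i = Sum.inl y) : y = e.fst ∨ y = e.snd := by
  rcases hP.eq_zero_or_eq_last_of_eq_inl h with rfl | rfl
  · exact .inl (Sum.inl.inj (h.symm.trans (hP.zero e)))
  · exact .inr (Sum.inl.inj (h.symm.trans (hP.last e)))

lemma not_adj_inl_inl (hP : SubdivisionPaths G d Gs P) (hd : 2 ≤ d) (a b : V) :
    ¬ Gs.Adj (Sum.inl a) (Sum.inl b) := by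
  intro h
  obtain ⟨e, k, hk, hk'⟩ := hP.exists_of_adj _ _ h
  have := hP.eq_zero_or_eq_last_of_eq_inl hk
  have := hP.eq_zero_or_eq_last_of_eq_inl hk'
  simp only [Fin.ext_iff, Fin.val_castSucc, Fin.val_succ, Fin.val_zero, Fin.val_last] at *
  omega

lemma exists_eq_of_adj (hP : SubdivisionPaths G d Gs P) {e : G.Dart} {i : Fin (d + 1)} {s : S}
    (h : P e i = Sum.inr s) {z : V ⊕ S} (hz : Gs.Adj z (P e i)) : ∃ j, P e j = z := by
  obtain ⟨e', k, hk, hk'⟩ := hP.exists_of_adj _ _ hz.symm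
  obtain ⟨hi, hi'⟩ := hP.pos_and_lt_of_eq_inr h
  rcases hP.eq_of_interior e e' i k.castSucc hi hi' hk.symm with ⟨rfl, -⟩ | ⟨rfl, -⟩
  · exact ⟨k.succ, hk'⟩
  · exact ⟨k.succ.rev, by rw [← hk', hP.symm]⟩

lemma eq_fst_or_eq_snd_of_mem_getLast? (hP : SubdivisionPaths G d Gs P) {L : List (V ⊕ S)}
    {e : G.Dart} {i : Fin (d + 1)} {s : S} (h : P e i = Sum.inr s)
    (hL : (L ++ [P e i]).IsChain Gs.Adj) :
    ∀ c ∈ (L.filterMap Sum.getLeft?).getLast?, c = e.fst ∨ c = e.snd := by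
  induction L using List.reverseRecOn generalizing i s with
  | nil => simp
  | append_singleton L a ih =>
    have hLa : (L ++ [a]).IsChain Gs.Adj ∧ Gs.Adj a (P e i) := by simpa using hL
    obtain ⟨j, rfl⟩ := hP.exists_eq_of_adj h hLa.2
    cases hj : P e j with
    | inl y =>
      intro c hc
      simp only [List.filterMap_append, List.filterMap_cons, Sum.getLeft?_inl,
        List.filterMap_nil, List.getLast?_concat, Option.mem_some_iff] at hc
      exact hc ▸ hP.eq_fst_or_eq_snd_of_eq_inl hj
    | inr s' =>
      simpa [List.filterMap_append, hj] using ih hj (hj ▸ hLa.1)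

lemma eq_fst_or_eq_snd_of_mem_head? (hP : SubdivisionPaths G d Gs P) {L : List (V ⊕ S)}
    {e : G.Dart} {i : Fin (d + 1)} {s : S} (h : P e i = Sum.inr s)
    (hL : (P e i :: L).IsChain Gs.Adj) :
    ∀ c ∈ (L.filterMap Sum.getLeft?).head?, c = e.fst ∨ c = e.snd := by
  have hL' : (L.reverse ++ [P e i]).IsChain Gs.Adj := by
    rw [← List.reverse_cons, List.isChain_reverse]
    exact hL.imp fun _ _ hab => hab.symm
  simpa [List.filterMap_reverse] using hP.eq_fst_or_eq_snd_of_mem_getLast? h hL'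

lemma DRC_id_eq_or_reduceStep_of_inr_inl (hP : SubdivisionPaths G d Gs P)
    {p s : List (V ⊕ S)} {σ : S} {b : V}
    (hL : (p ++ [Sum.inr σ, Sum.inl b, Sum.inr σ] ++ s).IsChain Gs.Adj)
    (hp : ∃ y, Sum.inl y ∈ p) (hs : ∃ y, Sum.inl y ∈ s) :
    DRC id (p ++ [Sum.inr σ, Sum.inl b, Sum.inr σ] ++ s) = DRC id (p ++ [Sum.inr σ] ++ s) ∨
      ReduceStep (DRC id (p ++ [Sum.inr σ, Sum.inl b, Sum.inr σ] ++ s))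
        (DRC id (p ++ [Sum.inr σ] ++ s)) := by
  obtain ⟨e, i, hσ⟩ := hP.exists_eq_inr σ
  obtain ⟨c, hc⟩ : ∃ c, (p.filterMap Sum.getLeft?).getLast? = some c := by
    obtain ⟨y, hy⟩ := hp
    exact Option.isSome_iff_exists.mp <| List.getLast?_isSome.mpr <|
      List.ne_nil_of_mem (List.mem_filterMap.mpr ⟨_, hy, rfl⟩)
  obtain ⟨c', hc'⟩ : ∃ c', (s.filterMap Sum.getLeft?).head? = some c' := by
    obtain ⟨y, hy⟩ := hs
    exact Option.isSome_iff_exists.mp <| List.isSome_head?.mpr <|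
      List.ne_nil_of_mem (List.mem_filterMap.mpr ⟨_, hy, rfl⟩)
  have hcE := hP.eq_fst_or_eq_snd_of_mem_getLast? hσ
    (L := p) (by rw [hσ]; exact hL.infix ⟨[], [Sum.inl b, Sum.inr σ] ++ s, by simp⟩) c hc
  have hbE := hP.eq_fst_or_eq_snd_of_mem_getLast? hσ
    (L := p ++ [Sum.inr σ, Sum.inl b]) (by rw [hσ]; exact hL.infix ⟨[], s, by simp⟩) b
    (by simp [List.filterMap_cons])
  have hc'E := hP.eq_fst_or_eq_snd_of_mem_head? hσ
    (L := s) (by rw [hσ]; exact hL.infix ⟨p ++ [Sum.inr σ, Sum.inl b], [], by simp⟩) c' hc'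
  -- `c`, `b` and `c'` are ends of the same dart `e`, so two of them coincide
  simpa [DRC, List.filterMap_cons] using compress_append_cons_eq_or_reduceStep hc hc' (by grind)

lemma DRC_id_eq_or_reduceStep (hP : SubdivisionPaths G d Gs P) (hd : 2 ≤ d)
    {L L' : List (V ⊕ S)} (hL : L.IsChain Gs.Adj) (hhead : ∃ y, L.head? = some (Sum.inl y))
    (hlast : ∃ y, L.getLast? = some (Sum.inl y)) (h : ReduceStep L L') :
    DRC id L = DRC id L' ∨ ReduceStep (DRC id L) (DRC id L') := by
  obtain ⟨p, s, u, v, rfl, rfl⟩ := h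
  have huv : Gs.Adj u v := List.isChain_pair.mp (hL.infix ⟨p, [u] ++ s, by simp⟩)
  rcases u with a | σ <;> rcases v with b | τ
  · exact absurd huv (hP.not_adj_inl_inl hd a b)
  · left
    simpa [DRC, List.filterMap_cons] using
      compress_append_cons_cons_self (p.filterMap Sum.getLeft?) a (s.filterMap Sum.getLeft?)
  · refine hP.DRC_id_eq_or_reduceStep_of_inr_inl hL ?_ ?_
    · obtain ⟨y, hy⟩ := hhead
      rcases p with _ | ⟨a, p⟩
      · simp at hy
      · obtain rfl : a = Sum.inl y := by simpa using hy
        exact ⟨y, List.mem_cons_self⟩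
    · obtain ⟨y, hy⟩ := hlast
      rcases s.eq_nil_or_concat with rfl | ⟨s, a, rfl⟩
      · simp at hy
      · obtain rfl : a = Sum.inl y := by simpa [← List.append_assoc] using hy
        exact ⟨y, by simp⟩
  · left
    simp [DRC, List.filterMap_cons]

end SubdivisionPaths

end Subdivision

section DRC

variable {V' V S : Type*} {f : V' → V ⊕ S} {x : V'} {y : V}

lemma DRC_eq_DRC_id_map (f : V' → V ⊕ S) (w : List V') : DRC f w = DRC id (w.map f) := by
  simp [DRC, List.filterMap_map]

lemma head?_DRC (hx : f x = Sum.inl y) {w : List V'} (hw : w.head? = some x) :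
    (DRC f w).head? = some y := by
  rw [DRC, head?_compress, List.eq_cons_of_mem_head? hw]
  simp [hx]

lemma getLast?_DRC (hx : f x = Sum.inl y) {w : List V'} (hw : w.getLast? = some x) :
    (DRC f w).getLast? = some y := by
  rw [DRC, getLast?_compress, ← List.dropLast_append_getLast? x hw]
  simp [hx]

lemma DRC_lconcat (hx : f x = Sum.inl y) {a b : List V'} (ha : a.getLast? = some x)
    (hb : b.head? = some x) : DRC f (lconcat a b) = lconcat (DRC f a) (DRC f b) := by
  obtain ⟨A, rfl⟩ : ∃ A, a = A ++ [x] := ⟨_, (List.dropLast_append_getLast? x ha).symm⟩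
  obtain ⟨B, rfl⟩ : ∃ B, b = x :: B := ⟨_, List.eq_cons_of_mem_head? hb⟩
  simp only [DRC, lconcat, List.dropLast_concat, List.filterMap_append, List.filterMap_cons, hx,
    Sum.getLeft?_inl, List.filterMap_nil]
  exact compress_append_cons _ y _

variable {G : SimpleGraph V} {d : ℕ} {Gs : SimpleGraph (V ⊕ S)}
  {P : G.Dart → Fin (d + 1) → V ⊕ S} {G' : SimpleGraph V'}

lemma SubdivisionPaths.DRC_eq_or_reduceStep (hP : SubdivisionPaths G d Gs P) (hd : 2 ≤ d)
    (hf : ∀ ⦃u v⦄, G'.Adj u v → Gs.Adj (f u) (f v)) (hx : f x = Sum.inl y) {w w' : List V'}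
    (hw : IsLoopWord G' x w) (h : ReduceStep w w') :
    DRC f w = DRC f w' ∨ ReduceStep (DRC f w) (DRC f w') := by
  rw [DRC_eq_DRC_id_map f w, DRC_eq_DRC_id_map f w']
  exact hP.DRC_id_eq_or_reduceStep hd ((List.isChain_map f).mpr (hw.1.imp hf))
    ⟨y, by simp [hw.2.1, hx]⟩ ⟨y, by simp [hw.2.2, hx]⟩ (h.map f)

lemma SubdivisionPaths.reduce_DRC_eq_of_reflTransGen (hP : SubdivisionPaths G d Gs P)
    (hd : 2 ≤ d) (hf : ∀ ⦃u v⦄, G'.Adj u v → Gs.Adj (f u) (f v)) (hx : f x = Sum.inl y)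
    {w w' : List V'} (hw : IsLoopWord G' x w) (h : ReflTransGen ReduceStep w w') :
    reduce (DRC f w) = reduce (DRC f w') := by
  induction h with
  | refl => rfl
  | tail h₁ h₂ ih =>
    rcases hP.DRC_eq_or_reduceStep hd hf hx (hw.of_reflTransGen h₁) h₂ with he | hs
    · rw [ih, he]
    · rw [ih, reduce_eq_of_reflTransGen (.single hs)]

end DRC

lemma GraphTower.reduce_phi_reduce (T : GraphTower) (n : ℕ) {w : List (T.V (n + 1))}
    (hw : IsLoopWord (T.G (n + 1)) (T.x (n + 1)) w) :
    reduce (T.phi n (reduce w)) = reduce (T.phi n w) := by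
  obtain ⟨P, hP⟩ := (T.subdiv n).exists_subdivisionPaths
  exact (hP.reduce_DRC_eq_of_reflTransGen (T.two_le_d n) (T.f_simplicial n) (T.f_base n) hw
    (reflTransGen_reduce w)).symm

theorem statement_7_general (T : GraphTower) (n : ℕ) (ω ξ : List (T.V (n + 1)))
    (hω : IsLoopWord (T.G (n + 1)) (T.x (n + 1)) ω)
    (hξ : IsLoopWord (T.G (n + 1)) (T.x (n + 1)) ξ) :
    reduce (T.phi n (reduce (lconcat ω ξ))) =
      reduce (lconcat (reduce (T.phi n ω)) (reduce (T.phi n ξ))) := by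
  calc reduce (T.phi n (reduce (lconcat ω ξ)))
      _ = reduce (T.phi n (lconcat ω ξ)) := T.reduce_phi_reduce n (hω.lconcat hξ)
      _ = reduce (lconcat (T.phi n ω) (T.phi n ξ)) := by
        rw [GraphTower.phi, DRC_lconcat (T.f_base n) hω.2.2 hξ.2.1]
      _ = reduce (lconcat (reduce (T.phi n ω)) (reduce (T.phi n ξ))) :=
        (reduce_lconcat_reduce_reduce (getLast?_DRC (T.f_base n) hω.2.2)
          (head?_DRC (T.f_base n) hξ.2.1)).symm

/-- For every `n`, the map `φ'_n(ω) = φ_n(ω)'` is a homomorphism for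
`∗`: for all reduced loop words `ω, ξ ∈ Ω'_{n+1}`,
`φ'_n(ω ∗ ξ) = φ'_n(ω) ∗ φ'_n(ξ)`. -/
theorem statement_7 (T : GraphTower) (n : ℕ) (ω ξ : List (T.V (n + 1)))
    (hω : IsLoopWord (T.G (n + 1)) (T.x (n + 1)) ω) (hω' : IsReduced ω)
    (hξ : IsLoopWord (T.G (n + 1)) (T.x (n + 1)) ξ) (hξ' : IsReduced ξ) :
    reduce (T.phi n (reduce (lconcat ω ξ))) =
      reduce (lconcat (reduce (T.phi n ω)) (reduce (T.phi n ξ))) :=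
  statement_7_general T n ω ξ hω hξ

end GCG
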